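/- arXiv:2107.06150 — 2 statements merged into one kernel-verified Lean document; each statement's English description precedes it below -/
import Mathlib

section
/- Fix N ∈ ℕ and r ≥ 0. Let f : ℕ → ℝ be r-Lipschitz with respect to the metric |m − n| on ℕ and the Euclidean metric on ℝ. Define f* : ℕ → ℝ by f*(2i) = f(2i) and f*(2i+1) = f(2i). Let H(g) = (1/(N+1)) · Σ_{i=0}^{N} g(i). Then |H(f) − H(f*)| ≤ ((⌊N/2⌋ + 1)/(N+1)) · r. -/
open Finset

lemma aux_sum_if (r : ℝ) : ∀ n : ℕ,
    ∑ i ∈ range n, (if Even i then (0:ℝ) else r) = ((n / 2 : ℕ) : ℝ) * r := by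
  intro n
  induction n with
  | zero => simp
  | succ n ih =>
    rw [Finset.sum_range_succ, ih]
    rcases Nat.even_or_odd n with h | h
    · have : (n + 1) / 2 = n / 2 := by obtain ⟨k, hk⟩ := h; omega
      simp [h, this]
    · have h2 : ¬ Even n := Nat.not_even_iff_odd.mpr h
      have hd : (n + 1) / 2 = n / 2 + 1 := by
        obtain ⟨k, hk⟩ := h; omega
      simp [h2, hd]
      ring

/-- Loop-perforation error bound: replacing an `r`-Lipschitz `f : ℕ → ℝ` by its
perforation `f*` (with `f*(2i) = f*(2i+1) = f(2i)`), the averages over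
`0, …, N` differ by at most `((⌊N/2⌋+1)/(N+1))·r`. -/
theorem stmt_6 (N : ℕ) (r : ℝ) (hr : 0 ≤ r) (f : ℕ → ℝ)
    (hf : ∀ m n : ℕ, |f m - f n| ≤ r * |(m : ℝ) - (n : ℝ)|)
    (fstar : ℕ → ℝ)
    (hstar : ∀ i : ℕ, fstar (2 * i) = f (2 * i) ∧ fstar (2 * i + 1) = f (2 * i)) :
    |(1 / (N + 1 : ℝ)) * ∑ i ∈ range (N + 1), f i
      - (1 / (N + 1 : ℝ)) * ∑ i ∈ range (N + 1), fstar i|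
      ≤ (((N / 2 + 1 : ℕ) : ℝ) / (N + 1 : ℝ)) * r := by
  have hpos : (0:ℝ) < (N:ℝ) + 1 := by positivity
  have key : ∀ i : ℕ, |f i - fstar i| ≤ (if Even i then (0:ℝ) else r) := by
    intro i
    rcases Nat.even_or_odd i with ⟨k, hk⟩ | ⟨k, hk⟩
    · have : fstar i = f i := by
        have := (hstar k).1
        rw [show 2 * k = i by omega] at this
        rw [this]
      simp [this, Nat.even_iff.mpr (by omega : i % 2 = 0)]
    · have h2 : ¬ Even i := by simp [Nat.even_iff, Nat.odd_iff.mp ⟨k, hk⟩]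
      have hfs : fstar i = f (2 * k) := by
        have := (hstar k).2
        rw [show 2 * k + 1 = i by omega] at this
        exact this
      rw [hfs, if_neg h2]
      subst hk
      calc |f (2*k+1) - f (2*k)| ≤ r * |((2*k+1 : ℕ):ℝ) - ((2*k : ℕ):ℝ)| := hf _ _
        _ = r := by
            rw [show ((2*k+1 : ℕ):ℝ) - ((2*k : ℕ):ℝ) = 1 by push_cast; ring]
            simp
  have hsum : |∑ i ∈ range (N+1), f i - ∑ i ∈ range (N+1), fstar i|
      ≤ ((N / 2 + 1 : ℕ) : ℝ) * r := by
    rw [← Finset.sum_sub_distrib]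
    calc |∑ i ∈ range (N+1), (f i - fstar i)|
        ≤ ∑ i ∈ range (N+1), |f i - fstar i| := Finset.abs_sum_le_sum_abs _ _
      _ ≤ ∑ i ∈ range (N+1), (if Even i then (0:ℝ) else r) :=
          Finset.sum_le_sum (fun i _ => key i)
      _ = (((N+1) / 2 : ℕ) : ℝ) * r := aux_sum_if r (N+1)
      _ ≤ ((N / 2 + 1 : ℕ) : ℝ) * r := by
          apply mul_le_mul_of_nonneg_right _ hr
          exact_mod_cast (by omega : (N+1)/2 ≤ N/2 + 1)
  calc |(1 / (N + 1 : ℝ)) * ∑ i ∈ range (N + 1), f i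
      - (1 / (N + 1 : ℝ)) * ∑ i ∈ range (N + 1), fstar i|
      = (1/((N:ℝ)+1)) * |∑ i ∈ range (N+1), f i - ∑ i ∈ range (N+1), fstar i| := by
        rw [← mul_sub, abs_mul, abs_of_pos (by positivity : (0:ℝ) < 1/((N:ℝ)+1))]
    _ ≤ (1/((N:ℝ)+1)) * (((N / 2 + 1 : ℕ) : ℝ) * r) :=
        mul_le_mul_of_nonneg_left hsum (by positivity)
    _ = (((N / 2 + 1 : ℕ) : ℝ) / ((N:ℝ) + 1)) * r := by ring
end

section
/- Let (X, Δ_X, ⊕, ⊖) and (Y, Δ_Y, ⊕', ⊖') be change structures. Define Y^X-changes by: Δ(f) = { φ : (x : X) → Δ_X x → Δ_Y : ∀ x dx, φ(x,dx) ∈ Δ_Y f(x) }, with (f ⊕* φ)(x) = f(x) ⊕' φ(x, 0_x) and (f ⊖* g)(x, dx) = f(x ⊕ dx) ⊖' g(x). Then (Y^X, Δ, ⊕*, ⊖*) is a change structure: (1) f ⊖* g ∈ Δ(g) for all f, g : X → Y, and (2) g ⊕* (f ⊖* g) = f for all f, g : X → Y. -/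
/-- A change structure on `X`, with changes drawn from a type `D`:
`Δ x ⊆ D` is the set of changes over `x`, `oplus x d` applies a change, and
`ominus y x` is a change from `x` to `y`. -/
structure ChangeStruct (X : Type*) (D : Type*) where
  Δ : X → Set D
  oplus : X → D → X
  ominus : X → X → D
  ominus_mem : ∀ x y : X, ominus y x ∈ Δ x
  oplus_ominus : ∀ x y : X, oplus x (ominus y x) = y

/-- The change derivative of `f` with respect to change structures `CX`, `CY`. -/
def chDer {X Y DX DY : Type*} (CX : ChangeStruct X DX) (CY : ChangeStruct Y DY)
    (f : X → Y) (x : X) (dx : DX) : DY :=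
  CY.ominus (f (CX.oplus x dx)) (f x)

/-- Changes over a function `f : X → Y`: functions `φ` assigning to each point
and each change over it a change over `f(x)`. -/
def expΔ {X Y DX DY : Type*} (CX : ChangeStruct X DX) (CY : ChangeStruct Y DY)
    (f : X → Y) : Set (X → DX → DY) :=
  {φ | ∀ (x : X) (dx : DX), dx ∈ CX.Δ x → φ x dx ∈ CY.Δ (f x)}

/-- `f ⊖* g` for functions. -/
def expOminus {X Y DX DY : Type*} (CX : ChangeStruct X DX) (CY : ChangeStruct Y DY)
    (f g : X → Y) : X → DX → DY :=
  fun x dx => CY.ominus (f (CX.oplus x dx)) (g x)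

/-- `f ⊕* φ` for functions. -/
def expOplus {X Y DX DY : Type*} (CX : ChangeStruct X DX) (CY : ChangeStruct Y DY)
    (f : X → Y) (φ : X → DX → DY) : X → Y :=
  fun x => CY.oplus (f x) (φ x (CX.ominus x x))

/-- The exponential of change structures is a change structure:
`f ⊖* g ∈ Δ(g)` and `g ⊕* (f ⊖* g) = f`. -/
theorem stmt_14 {X Y DX DY : Type*} (CX : ChangeStruct X DX) (CY : ChangeStruct Y DY) :
    (∀ f g : X → Y, expOminus CX CY f g ∈ expΔ CX CY g) ∧
    (∀ f g : X → Y, expOplus CX CY g (expOminus CX CY f g) = f) := by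
  constructor
  · intro f g x dx _
    exact CY.ominus_mem _ _
  · intro f g
    funext x
    simp [expOplus, expOminus, CX.oplus_ominus, CY.oplus_ominus]
end
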